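/- Let R be a commutative noetherian ring and 𝔞 an ideal. If M is an R-module annihilated by 𝔞, then its injective envelope in the category of R-modules annihilated by a power of 𝔞 is the 𝔞-power-torsion submodule Γ_𝔞(E), where E is the injective envelope of M over R; in particular every essential extension of M inside the 𝔞-power-torsion category embeds in Γ_𝔞(E), and Γ_𝔞(E) is injective in that category. -/
import Mathlib


/-- The `𝔞`-power-torsion submodule `Γ_𝔞(N) = { x ∈ N : 𝔞^k x = 0 for some k }`. -/
noncomputable def powerTorsion (R : Type) [CommRing R] (a : Ideal R)
    (N : Type) [AddCommGroup N] [Module R N] : Submodule R N :=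
  ⨆ c : ℕ, Submodule.torsionBySet R N ((a ^ c : Ideal R) : Set R)

lemma mem_powerTorsion_iff (R : Type) [CommRing R] (a : Ideal R)
    (N : Type) [AddCommGroup N] [Module R N] (x : N) :
    x ∈ powerTorsion R a N ↔ ∃ c : ℕ, ∀ r ∈ (a ^ c : Ideal R), r • x = 0 := by
  rw [powerTorsion, Submodule.mem_iSup_of_directed]
  · constructor
    · rintro ⟨c, hc⟩
      exact ⟨c, fun r hr => (Submodule.mem_torsionBySet_iff _ _).mp hc ⟨r, hr⟩⟩
    · rintro ⟨c, hc⟩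
      exact ⟨c, (Submodule.mem_torsionBySet_iff _ _).mpr fun r => hc r r.2⟩
  · intro i j
    exact ⟨max i j,
      Submodule.torsionBySet_le_torsionBySet_of_subset
        (Ideal.pow_le_pow_right (le_max_left i j)),
      Submodule.torsionBySet_le_torsionBySet_of_subset
        (Ideal.pow_le_pow_right (le_max_right i j))⟩

lemma map_mem_powerTorsion (R : Type) [CommRing R] (a : Ideal R)
    {N E : Type} [AddCommGroup N] [Module R N] [AddCommGroup E] [Module R E]
    (hN : powerTorsion R a N = ⊤) (g : N →ₗ[R] E) (n : N) :
    g n ∈ powerTorsion R a E := by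
  have hn : n ∈ powerTorsion R a N := hN ▸ Submodule.mem_top
  obtain ⟨c, hc⟩ := (mem_powerTorsion_iff R a N n).mp hn
  exact (mem_powerTorsion_iff R a E (g n)).mpr
    ⟨c, fun r hr => by rw [← map_smul, hc r hr, map_zero]⟩

/-- Let `R` be commutative noetherian, `𝔞` an ideal, `E` an injective `R`-module, and
`M ⊆ E` an essential submodule annihilated by `𝔞` (so `E` is the injective envelope of
`M`).  Then `Γ_𝔞(E)` is the injective envelope of `M` in the category of `𝔞`-power-torsion
modules: `M ⊆ Γ_𝔞(E)`, every essential extension of `M` by an `𝔞`-power-torsion module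
embeds into `Γ_𝔞(E)` over `M`, and `Γ_𝔞(E)` is injective in the `𝔞`-power-torsion
category. -/
theorem stmt8 (R : Type) [CommRing R] [IsNoetherianRing R] (a : Ideal R)
    (E : Type) [AddCommGroup E] [Module R E] (hE : Module.Injective R E)
    (M : Submodule R E)
    (hMess : ∀ N : Submodule R E, N ⊓ M = ⊥ → N = ⊥)
    (hMa : ∀ x ∈ a, ∀ m ∈ M, x • m = 0) :
    -- `M` lies in the torsion part of `E`
    M ≤ powerTorsion R a E ∧
    -- every essential extension of `M` in the torsion category embeds in `Γ_𝔞(E)` over `M`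
    (∀ (N : Type) [AddCommGroup N] [Module R N], powerTorsion R a N = ⊤ →
      ∀ j : M →ₗ[R] N, Function.Injective j →
      (∀ P : Submodule R N, P ⊓ LinearMap.range j = ⊥ → P = ⊥) →
      ∃ g : N →ₗ[R] E, Function.Injective g ∧
        LinearMap.range g ≤ powerTorsion R a E ∧ ∀ m : M, g (j m) = (m : E)) ∧
    -- `Γ_𝔞(E)` is injective in the `𝔞`-power-torsion category
    (∀ (X Y : Type) [AddCommGroup X] [Module R X] [AddCommGroup Y] [Module R Y],
      powerTorsion R a X = ⊤ → powerTorsion R a Y = ⊤ →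
      ∀ f : X →ₗ[R] Y, Function.Injective f →
      ∀ g : X →ₗ[R] ↥(powerTorsion R a E),
      ∃ g' : Y →ₗ[R] ↥(powerTorsion R a E), g'.comp f = g) := by
  refine ⟨?_, ?_, ?_⟩
  · intro m hm
    rw [mem_powerTorsion_iff]
    exact ⟨1, fun r hr => by rw [pow_one] at hr; exact hMa r hr m hm⟩
  · intro N _ _ hN j hj hNess
    obtain ⟨g, hg⟩ := hE.out j hj M.subtype
    refine ⟨g, ?_, ?_, hg⟩
    · rw [← LinearMap.ker_eq_bot]
      apply hNess
      rw [eq_bot_iff]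
      rintro x ⟨hx, m, rfl⟩
      have : (m : E) = 0 := by rw [show (m : E) = g (j m) from (hg m).symm]; exact hx
      have hm0 : m = 0 := Subtype.ext this
      simp [hm0]
    · rintro y ⟨n, rfl⟩
      exact map_mem_powerTorsion R a hN g n
  · intro X Y _ _ _ _ hX hY f hf g
    obtain ⟨h, hh⟩ := hE.out f hf ((powerTorsion R a E).subtype.comp g)
    refine ⟨LinearMap.codRestrict _ h (fun y => map_mem_powerTorsion R a hY h y), ?_⟩
    ext x
    simpa using hh x
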